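/- Let p > 1 and let U : [0,∞) → ℝ be a C¹ function satisfying U(t) ≥ c·ε for all t ≥ 0 (with c, ε > 0) and U(t) ≥ ∫_0^t e^{τ−t} ∫_0^τ U(s)^p ds dτ for all t ≥ 0. Then for all j ∈ ℕ and t ≥ L_j (where L_j = ∏_{k=0}^j (1+p^{-k})) one has U(t) ≥ C_j·(t − L_j)^{γ_j}, where C_0 = cε, γ_0 = 0, γ_{j+1} = 1 + p·γ_j, and C_{j+1} = (p−1/2)·C_j^p·p^{-2(j+1)}/((γ_j p + 1)·ℓ_{j+1}^{γ_j p + 1}) with ℓ_{j+1} = 1 + p^{-(j+1)}. -/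

import Mathlib

/-!
Induction on `j`. If `U s ≥ C (s - L)^γ` for `s ≥ L`, then `∫₀^τ U^p ≥ C^p (τ - L)^(γp+1)/(γp+1)`.
Put `ℓ = 1 + q` and `m = t/ℓ`; for `τ ∈ [m, t]` this is at least `K = C^p (m - L)^(γp+1)/(γp+1)`,
and `m - L = (t - Lℓ)/ℓ`. Keeping only `τ ∈ [m, t]` in the outer integral gives
`U t ≥ K (1 - e^(m - t))`, and `t - m ≥ L q ≥ 2q` with `pq ≤ 1` makes `1 - e^(m - t) ≥ (p - 1/2) q²`.
-/

open MeasureTheory Set Real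

theorem mul_one_sub_exp_le_integral_exp_sub_mul {g : ℝ → ℝ} {a m t K : ℝ} (ham : a ≤ m)
    (hmt : m ≤ t) (hg : IntervalIntegrable g volume a t) (hg0 : ∀ τ ∈ Icc a m, 0 ≤ g τ)
    (hgK : ∀ τ ∈ Icc m t, K ≤ g τ) :
    K * (1 - exp (m - t)) ≤ ∫ τ in a..t, exp (τ - t) * g τ := by
  have hexp : Continuous fun τ => exp (τ - t) := by fun_prop
  have hF : IntervalIntegrable (fun τ => exp (τ - t) * g τ) volume a t :=
    hg.continuousOn_mul hexp.continuousOn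
  have h1 : IntervalIntegrable (fun τ => exp (τ - t) * g τ) volume a m :=
    hF.mono_set (by rw [uIcc_of_le ham, uIcc_of_le (ham.trans hmt)]; exact Icc_subset_Icc_right hmt)
  have h2 : IntervalIntegrable (fun τ => exp (τ - t) * g τ) volume m t :=
    hF.mono_set (by rw [uIcc_of_le hmt, uIcc_of_le (ham.trans hmt)]; exact Icc_subset_Icc_left ham)
  have hval : ∫ τ in m..t, K * exp (τ - t) = K * (1 - exp (m - t)) := by
    rw [intervalIntegral.integral_const_mul, intervalIntegral.integral_comp_sub_right (fun u => exp u),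
      sub_self, integral_exp, exp_zero]
  rw [← intervalIntegral.integral_add_adjacent_intervals h1 h2, ← hval, ← zero_add (∫ τ in m..t, _)]
  gcongr
  · exact intervalIntegral.integral_nonneg ham fun τ hτ => mul_nonneg (exp_nonneg _) (hg0 τ hτ)
  · exact intervalIntegral.integral_mono_on hmt (hexp.intervalIntegrable _ _ |>.const_mul K) h2
      fun τ hτ => by rw [mul_comm]; exact mul_le_mul_of_nonneg_left (hgK τ hτ) (exp_nonneg _)

theorem mul_rpow_div_le_integral {g : ℝ → ℝ} {a L b A r : ℝ} (hr : -1 < r) (haL : a ≤ L)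
    (hLb : L ≤ b) (hg : IntervalIntegrable g volume a b) (hg0 : ∀ s ∈ Icc a L, 0 ≤ g s)
    (hgA : ∀ s ∈ Icc L b, A * (s - L) ^ r ≤ g s) :
    A * ((b - L) ^ (r + 1) / (r + 1)) ≤ ∫ s in a..b, g s := by
  have h1 : IntervalIntegrable g volume a L :=
    hg.mono_set (by rw [uIcc_of_le haL, uIcc_of_le (haL.trans hLb)]; exact Icc_subset_Icc_right hLb)
  have h2 : IntervalIntegrable g volume L b :=
    hg.mono_set (by rw [uIcc_of_le hLb, uIcc_of_le (haL.trans hLb)]; exact Icc_subset_Icc_left haL)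
  have hval : ∫ s in L..b, A * (s - L) ^ r = A * ((b - L) ^ (r + 1) / (r + 1)) := by
    rw [intervalIntegral.integral_const_mul, intervalIntegral.integral_comp_sub_right (· ^ r),
      sub_self, integral_rpow (Or.inl hr), zero_rpow (by linarith), sub_zero]
  rw [← intervalIntegral.integral_add_adjacent_intervals h1 h2, ← hval, ← zero_add (∫ s in L..b, _)]
  gcongr
  · exact intervalIntegral.integral_nonneg haL hg0
  · refine intervalIntegral.integral_mono_on hLb ?_ h2 hgA
    have := (intervalIntegral.intervalIntegrable_rpow' hr (a := 0) (b := b - L)).comp_sub_right L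
    simpa using this.const_mul A

theorem sub_half_mul_sq_le_one_sub_exp_neg {p q L : ℝ} (hp : 1 ≤ p) (hq : 0 ≤ q)
    (hpq : p * q ≤ 1) (hL : 2 ≤ L) : (p - 1 / 2) * q ^ 2 ≤ 1 - exp (-(L * q)) := by
  have hq1 : q ≤ 1 := by nlinarith
  have hE : exp (-(L * q)) * (1 + 2 * q) ≤ 1 := by
    have := add_one_le_exp (L * q)
    rw [exp_neg, inv_mul_le_iff₀ (exp_pos _)]
    nlinarith
  have hB : (p - 1 / 2) * q ^ 2 ≤ q - q ^ 2 / 2 := by nlinarith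
  nlinarith [exp_pos (-(L * q))]

theorem iterate_rpow_lower_bound {p : ℝ} {U : ℝ → ℝ} (hp : 1 ≤ p) (hUcont : ContinuousOn U (Ici 0))
    (hUnonneg : ∀ s, 0 ≤ s → 0 ≤ U s) {L γ C q t : ℝ} (hL : 2 ≤ L) (hγ : 0 ≤ γ) (hC : 0 ≤ C)
    (hq : 0 ≤ q) (hpq : p * q ≤ 1) (hU : ∀ s, L ≤ s → U s ≥ C * (s - L) ^ γ)
    (hUint : ∀ t, 0 ≤ t → U t ≥ ∫ τ in (0 : ℝ)..t, exp (τ - t) * ∫ s in (0 : ℝ)..τ, U s ^ p)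
    (ht : L * (1 + q) ≤ t) :
    U t ≥ (p - 1 / 2) * C ^ p * q ^ 2 / ((γ * p + 1) * (1 + q) ^ (γ * p + 1)) *
      (t - L * (1 + q)) ^ (γ * p + 1) := by
  have hp0 : 0 < p := by linarith
  have hq1 : 0 < 1 + q := by linarith
  have hr : 0 < γ * p + 1 := by positivity
  have ht0 : 0 ≤ t := by nlinarith
  set m := t / (1 + q) with hm
  have hLm : L ≤ m := by rw [hm, le_div_iff₀ hq1]; exact ht
  have hmt : m ≤ t := div_le_self ht0 (by linarith)
  have hgap : L * q ≤ t - m := by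
    have : t - m = m * q := by rw [hm]; field_simp; ring
    rw [this]; exact mul_le_mul_of_nonneg_right hLm hq
  have hUp : IntegrableOn (fun s => U s ^ p) (uIcc 0 t) := by
    rw [uIcc_of_le ht0]
    exact ((hUcont.rpow_const fun _ _ => Or.inr hp0.le).mono fun _ hs => hs.1).integrableOn_Icc
  have hUpi : ∀ τ ∈ uIcc 0 t, IntervalIntegrable (fun s => U s ^ p) volume 0 τ := fun τ hτ =>
    (hUp.mono_set (uIcc_subset_uIcc_left hτ)).intervalIntegrable
  set K := C ^ p * ((m - L) ^ (γ * p + 1) / (γ * p + 1)) with hKdef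
  have hK : ∀ τ ∈ Icc m t, K ≤ ∫ s in (0 : ℝ)..τ, U s ^ p := by
    intro τ hτ
    have hτ0 : τ ∈ uIcc 0 t := by rw [uIcc_of_le ht0]; exact ⟨by linarith [hτ.1], hτ.2⟩
    have hτL : L ≤ τ := hLm.trans hτ.1
    have hpow : ∀ s ∈ Icc L τ, C ^ p * (s - L) ^ (γ * p) ≤ U s ^ p := fun s hs => by
      have hs0 : 0 ≤ s - L := by linarith [hs.1]
      rw [rpow_mul hs0, ← mul_rpow hC (rpow_nonneg hs0 γ)]
      exact rpow_le_rpow (by positivity) (hU s hs.1) hp0.le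
    calc K ≤ C ^ p * ((τ - L) ^ (γ * p + 1) / (γ * p + 1)) := by rw [hKdef]; gcongr; linarith [hτ.1]
      _ ≤ _ := mul_rpow_div_le_integral (by linarith) (by linarith) hτL (hUpi τ hτ0)
          (fun s hs => rpow_nonneg (hUnonneg s hs.1) p) hpow
  have hprim : IntervalIntegrable (fun τ => ∫ s in (0 : ℝ)..τ, U s ^ p) volume 0 t :=
    (intervalIntegral.continuousOn_primitive_interval hUp).intervalIntegrable
  have key := mul_one_sub_exp_le_integral_exp_sub_mul (by linarith) hmt hprim
    (fun τ hτ => intervalIntegral.integral_nonneg hτ.1 fun s hs => rpow_nonneg (hUnonneg s hs.1) p) hK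
  have hexp : (p - 1 / 2) * q ^ 2 ≤ 1 - exp (m - t) :=
    (sub_half_mul_sq_le_one_sub_exp_neg hp hq hpq hL).trans (by gcongr; linarith)
  have hmL : m - L = (t - L * (1 + q)) / (1 + q) := by rw [hm]; field_simp
  calc U t ≥ K * (1 - exp (m - t)) := key.trans (hUint t ht0)
    _ ≥ K * ((p - 1 / 2) * q ^ 2) := by gcongr
    _ = _ := by
      rw [hKdef, hmL, div_rpow (by linarith) hq1.le]
      field_simp

theorem mul_rpow_neg_succ_le_one {p : ℝ} (hp : 1 ≤ p) (j : ℕ) :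
    p * p ^ (-((j : ℝ) + 1)) ≤ 1 := by
  rw [mul_comm, ← rpow_add_one (by positivity)]
  exact rpow_le_one_of_one_le_of_nonpos hp (by linarith [(j.cast_nonneg : (0 : ℝ) ≤ j)])

theorem two_le_prod_one_add_rpow_neg {p : ℝ} (hp : 0 < p) (j : ℕ) :
    2 ≤ ∏ k ∈ Finset.range (j + 1), (1 + p ^ (-(k : ℝ))) := by
  rw [Finset.prod_range_succ', Nat.cast_zero, neg_zero, rpow_zero]
  have h1 : 1 ≤ ∏ k ∈ Finset.range j, (1 + p ^ (-((k + 1 : ℕ) : ℝ))) :=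
    Finset.one_le_prod fun k _ => by linarith [rpow_pos_of_pos hp (-((k + 1 : ℕ) : ℝ))]
  linarith

theorem stmt_16 (p c ε : ℝ) (hp : 1 < p) (hc : 0 < c) (hε : 0 < ε)
    (U : ℝ → ℝ)
    (hUcont : ContinuousOn U (Set.Ici 0))
    (hUnonneg : ∀ t : ℝ, 0 ≤ t → 0 ≤ U t)
    (hUlow : ∀ t : ℝ, 0 ≤ t → U t ≥ c * ε)
    (hUint : ∀ t : ℝ, 0 ≤ t →
      U t ≥ ∫ τ in (0 : ℝ)..t, Real.exp (τ - t) * ∫ s in (0 : ℝ)..τ, (U s) ^ p)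
    (ℓ : ℕ → ℝ) (hℓ : ∀ k : ℕ, ℓ k = 1 + p ^ (-(k : ℝ)))
    (L : ℕ → ℝ) (hL : ∀ j : ℕ, L j = ∏ k ∈ Finset.range (j + 1), ℓ k)
    (γ : ℕ → ℝ) (hγ0 : γ 0 = 0) (hγs : ∀ j : ℕ, γ (j + 1) = 1 + p * γ j)
    (C : ℕ → ℝ) (hC0 : C 0 = c * ε)
    (hCs : ∀ j : ℕ, C (j + 1) =
      (p - 1 / 2) * (C j) ^ p * p ^ (-2 * ((j : ℝ) + 1)) /
        ((γ j * p + 1) * (ℓ (j + 1)) ^ (γ j * p + 1))) :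
    ∀ j : ℕ, ∀ t : ℝ, L j ≤ t → U t ≥ C j * (t - L j) ^ (γ j) := by
  have hp0 : 0 < p := by linarith
  have hL2 (j : ℕ) : 2 ≤ L j := by simpa only [hL, hℓ] using two_le_prod_one_add_rpow_neg hp0 j
  have hγ (j : ℕ) : 0 ≤ γ j := by
    induction j with
    | zero => exact hγ0.ge
    | succ j ih => rw [hγs]; positivity
  have hC (j : ℕ) : 0 ≤ C j := by
    induction j with
    | zero => rw [hC0]; positivity
    | succ j ih =>
      have : 0 ≤ p - 1 / 2 := by linarith
      have := hγ j
      rw [hCs, hℓ]; positivity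
  intro j
  induction j with
  | zero =>
    intro t ht
    rw [hγ0, rpow_zero, mul_one, hC0]
    exact hUlow t (by linarith [hL2 0])
  | succ j ih =>
    have hℓq : ℓ (j + 1) = 1 + p ^ (-((j : ℝ) + 1)) := by rw [hℓ]; push_cast; rfl
    have hq2 : p ^ (-2 * ((j : ℝ) + 1)) = (p ^ (-((j : ℝ) + 1))) ^ 2 := by
      rw [← rpow_two, ← rpow_mul hp0.le]; ring_nf
    rw [hL, Finset.prod_range_succ, ← hL, hCs, hγs, hq2, hℓq, show 1 + p * γ j = γ j * p + 1 by ring]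
    exact fun t ↦ iterate_rpow_lower_bound hp.le hUcont hUnonneg (hL2 j) (hγ j) (hC j)
      (by positivity) (mul_rpow_neg_succ_le_one hp.le j) ih hUint
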